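/- Let k be a commutative ring, L a Lie algebra over k, M an L-module, and K a commutative associative unital k-algebra. If K is a flat k-module and L is finitely generated as a k-module, then the canonical map IDer_k(L,M) ⊗_k K → IDer_K(L⊗_k K, M⊗_k K) determined by ∂_m ⊗ s ↦ ∂_{m⊗s} is injective, and hence an isomorphism of k-modules. -/
import Mathlib


open TensorProduct

/-- For a Lie algebra `L` over `R` and an `L`-module `M`, the `R`-linear map
`∂ : M → Hom_R(L,M)`, `∂_m(l) = ⁅l, m⁆`, whose range is the submodule
`IDer_R(L,M)` of inner derivations. -/
def innerDer (R L M : Type*) [CommRing R] [LieRing L] [LieAlgebra R L]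
    [AddCommGroup M] [Module R M] [LieRingModule L M] [LieModule R L M] :
    M →ₗ[R] (L →ₗ[R] M) where
  toFun m :=
    { toFun := fun l => ⁅l, m⁆
      map_add' := fun x y => add_lie x y m
      map_smul' := fun c x => smul_lie c x m }
  map_add' m n := by ext l; exact lie_add l m n
  map_smul' c m := by ext l; exact lie_smul c l m

/-- If `K` is a flat `k`-module and `L` is finitely generated as a
`k`-module, then any `k`-linear map `IDer_k(L,M) ⊗_k K → Hom_K(L_K, M_K)` satisfying
`∂_m ⊗ s ↦ ∂_{m ⊗ s}` (i.e. the canonical map of Statement 2) is injective, and hence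
an isomorphism onto `IDer_K(L_K, M_K)`. -/
theorem stmt_3 {k L M K : Type*} [CommRing k] [LieRing L] [LieAlgebra k L]
    [AddCommGroup M] [Module k M] [LieRingModule L M] [LieModule k L M]
    [CommRing K] [Algebra k K]
    [Module.Flat k K] [Module.Finite k L] :
    ∀ Φ : (K ⊗[k] ↥(LinearMap.range (innerDer k L M))) →ₗ[k]
        ((K ⊗[k] L) →ₗ[K] (K ⊗[k] M)),
      (∀ (s : K) (m : M),
        Φ (s ⊗ₜ ⟨innerDer k L M m, LinearMap.mem_range_self _ m⟩) =
          innerDer K (K ⊗[k] L) (K ⊗[k] M) (s ⊗ₜ m)) →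
      Function.Injective Φ ∧
        Set.range ⇑Φ = ↑(LinearMap.range (innerDer K (K ⊗[k] L) (K ⊗[k] M))) := by
  intro Φ hΦ
  obtain ⟨n, l, hl⟩ := Module.Finite.exists_fin (R := k) (M := L)
  -- evaluation of an inner derivation at the generators
  let e : ↥(LinearMap.range (innerDer k L M)) →ₗ[k] (Fin n → M) :=
    { toFun := fun d i => (d : L →ₗ[k] M) (l i)
      map_add' := fun d₁ d₂ => by ext i; rfl
      map_smul' := fun c d => by ext i; rfl }
  have he : Function.Injective e := by
    intro d₁ d₂ h
    ext1
    apply LinearMap.ext_on hl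
    rintro x ⟨i, rfl⟩
    exact congrFun h i
  -- evaluation of a K-linear map at 1 ⊗ generators
  let ev : ((K ⊗[k] L) →ₗ[K] (K ⊗[k] M)) →ₗ[k] (Fin n → K ⊗[k] M) :=
    { toFun := fun f i => f ((1 : K) ⊗ₜ l i)
      map_add' := fun f g => by ext i; rfl
      map_smul' := fun c f => by ext i; rfl }
  have hev : Function.Injective ev := by
    intro f g h
    have key : ∀ x : L, f ((1 : K) ⊗ₜ x) = g ((1 : K) ⊗ₜ x) := by
      intro x
      have hx : x ∈ Submodule.span k (Set.range l) := hl ▸ Submodule.mem_top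
      induction hx using Submodule.span_induction with
      | mem x hx => obtain ⟨i, rfl⟩ := hx; exact congrFun h i
      | zero => simp
      | add x y _ _ hx hy => rw [tmul_add, map_add, map_add, hx, hy]
      | smul c x _ hx =>
        rw [tmul_smul, LinearMap.map_smul_of_tower, LinearMap.map_smul_of_tower, hx]
    apply LinearMap.ext
    intro x
    induction x using TensorProduct.induction_on with
    | zero => simp
    | tmul s m =>
      have : s ⊗ₜ[k] m = s • ((1 : K) ⊗ₜ[k] m) := by
        rw [smul_tmul', smul_eq_mul, mul_one]
      rw [this, map_smul, map_smul, key]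
    | add x y hx hy => rw [map_add, map_add, hx, hy]
  -- the composite ev ∘ Φ equals piRight ∘ (lTensor K e)
  have hfact : ev ∘ₗ Φ =
      (((TensorProduct.piRight k k K (fun _ : Fin n => M)).restrictScalars k).toLinearMap) ∘ₗ
        LinearMap.lTensor K e := by
    apply TensorProduct.ext'
    rintro s ⟨d, hd⟩
    obtain ⟨m, rfl⟩ := hd
    ext i
    simp only [LinearMap.comp_apply, LinearMap.lTensor_tmul, LinearEquiv.coe_coe,
      LinearEquiv.restrictScalars_apply, TensorProduct.piRight_apply,
      TensorProduct.piRightHom_tmul]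
    show (Φ (s ⊗ₜ ⟨innerDer k L M m, LinearMap.mem_range_self _ m⟩)) ((1:K) ⊗ₜ l i)
      = s ⊗ₜ (innerDer k L M m (l i))
    rw [hΦ]
    show ⁅(1:K) ⊗ₜ[k] l i, s ⊗ₜ[k] m⁆ = s ⊗ₜ ⁅l i, m⁆
    rw [LieAlgebra.ExtendScalars.bracket_tmul, one_mul]
  have hinj : Function.Injective Φ := by
    have h1 : Function.Injective (ev ∘ₗ Φ) := by
      rw [hfact]
      exact ((TensorProduct.piRight k k K (fun _ : Fin n => M)).injective).comp
        (Module.Flat.lTensor_preserves_injective_linearMap e he)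
    exact fun a b hab => h1 (by simp [LinearMap.comp_apply, hab])
  refine ⟨hinj, ?_⟩
  -- range
  let π := (innerDer k L M).rangeRestrict
  have hπ : Function.Surjective (LinearMap.lTensor K π) :=
    LinearMap.lTensor_surjective K (LinearMap.surjective_rangeRestrict _)
  have hcomp : Φ ∘ₗ LinearMap.lTensor K π =
      (innerDer K (K ⊗[k] L) (K ⊗[k] M)).restrictScalars k := by
    apply TensorProduct.ext'
    intro s m
    simp only [LinearMap.comp_apply, LinearMap.lTensor_tmul, LinearMap.restrictScalars_apply]
    exact hΦ s m
  calc Set.range ⇑Φ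
      = Set.range (⇑Φ ∘ ⇑(LinearMap.lTensor K π)) := (Function.Surjective.range_comp hπ ⇑Φ).symm
    _ = Set.range ⇑((innerDer K (K ⊗[k] L) (K ⊗[k] M)).restrictScalars k) := by
        rw [← LinearMap.coe_comp, hcomp]
    _ = ↑(LinearMap.range (innerDer K (K ⊗[k] L) (K ⊗[k] M))) := by
        rw [LinearMap.coe_restrictScalars]
        exact (LinearMap.coe_range _).symm
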